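/- arXiv:1602.01551 — 10 statements merged into one kernel-verified Lean document; each statement's English description precedes it below -/
import Mathlib

section
/- Let N, G, H be positive natural numbers and let X be a natural number. Set μ = ⌊G·H / N⌋ and Q̂ = ⌊(⌊X/G⌋ · μ) / H⌋. Then Q̂ ≤ ⌊X/N⌋; in particular Q̂ · N ≤ X. -/
/-- Barrett quotient estimate never exceeds the true quotient:
`Q̂ = ((X / G) * (G * H / N)) / H ≤ X / N`, hence `Q̂ * N ≤ X`.
All divisions are natural-number (floor) divisions. -/
theorem barrett_estimate_le_true_quotient
    (N G H X : ℕ) (hN : 0 < N) (hG : 0 < G) (hH : 0 < H) :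
    (X / G * (G * H / N)) / H ≤ X / N ∧
      ((X / G * (G * H / N)) / H) * N ≤ X := by
  have h1 : X / G * (G * H / N) ≤ X / G * (G * H) / N :=
    Nat.mul_div_le_mul_div_assoc _ _ _
  have h2 : (X / G * (G * H / N)) / H ≤ (X / G * (G * H) / N) / H :=
    Nat.div_le_div_right h1
  have h3 : (X / G * (G * H) / N) / H = X / G * G / N := by
    rw [Nat.div_div_eq_div_mul, Nat.mul_comm N H, ← Nat.div_div_eq_div_mul,
      ← Nat.mul_assoc, Nat.mul_div_cancel _ hH]
  have h4 : X / G * G / N ≤ X / N :=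
    Nat.div_le_div_right (Nat.div_mul_le_self _ _)
  have hle : (X / G * (G * H / N)) / H ≤ X / N := h2.trans (h3 ▸ h4)
  exact ⟨hle, le_trans (Nat.mul_le_mul_right N hle) (Nat.div_mul_le_self _ _)⟩
end

section
/- (Theorem 1) Let N, G, H be positive natural numbers with G < N, and let X be a natural number with X < G·H. Set μ = ⌊G·H / N⌋ and Q̂ = ⌊(⌊X/G⌋ · μ) / H⌋. Then ⌊X/N⌋ ≤ Q̂ + 2, i.e. the quotient estimate is at most 2 away from the actual quotient ⌊X/N⌋. -/
/-- Theorem 1: if `G < N` and `X < G * H`, the Barrett quotient estimate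
`Q̂ = ((X / G) * (G * H / N)) / H` is at most 2 below the true quotient `X / N`.
All divisions are natural-number (floor) divisions. -/
theorem barrett_estimate_within_two
    (N G H X : ℕ) (hN : 0 < N) (hG : 0 < G) (hH : 0 < H)
    (hGN : G < N) (hX : X < G * H) :
    X / N ≤ (X / G * (G * H / N)) / H + 2 := by
  set q := X / G with hq
  set μ := G * H / N with hμ
  set Qh := q * μ / H with hQh
  have h1 : X < (q + 1) * G := (Nat.div_lt_iff_lt_mul hG).mp (Nat.lt_succ_self q)
  have h2 : G * H < (μ + 1) * N := (Nat.div_lt_iff_lt_mul hN).mp (Nat.lt_succ_self μ)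
  have h3 : q * μ < (Qh + 1) * H := (Nat.div_lt_iff_lt_mul hH).mp (Nat.lt_succ_self Qh)
  have h4 : q < H := (Nat.div_lt_iff_lt_mul hG).mpr (by rw [mul_comm]; exact hX)
  have key : X * H < ((Qh + 3) * N) * H := by nlinarith
  have hX' : X < (Qh + 3) * N := Nat.lt_of_mul_lt_mul_right key
  have : X / N < Qh + 3 := (Nat.div_lt_iff_lt_mul hN).mpr hX'
  omega
end

section
/- Let N, G, H be positive natural numbers with G < N and N² ≤ G·H, and let A, B be natural numbers with A < N and B < N. Set X = A·B, μ = ⌊G·H / N⌋, Q̂ = ⌊(⌊X/G⌋ · μ) / H⌋, and C = X − Q̂·N. Then Q̂·N ≤ X, C ≡ A·B (mod N), and 0 ≤ C < 3·N. -/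
/-- Barrett modular multiplication (Case 1): with `G < N`, `N^2 ≤ G * H`,
inputs `A, B < N`, the value `C = A*B - Q̂*N` satisfies `Q̂*N ≤ A*B`,
`C ≡ A*B (mod N)`, and `C < 3*N`. All divisions are floor divisions and
the subtraction is natural subtraction (exact by the first conclusion). -/
theorem barrett_mod_mul_case1
    (N G H A B : ℕ) (hN : 0 < N) (hG : 0 < G) (hH : 0 < H)
    (hGN : G < N) (hcond : N ^ 2 ≤ G * H)
    (hA : A < N) (hB : B < N) :
    (((A * B) / G * (G * H / N)) / H) * N ≤ A * B ∧
      (A * B - (((A * B) / G * (G * H / N)) / H) * N) ≡ A * B [MOD N] ∧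
      A * B - (((A * B) / G * (G * H / N)) / H) * N < 3 * N := by
  set X := A * B with hX
  set μ := G * H / N with hμ
  set q := X / G with hq
  set Q := q * μ / H with hQ
  have h1 : q * G ≤ X := Nat.div_mul_le_self X G
  have h2 : X < (q + 1) * G := (Nat.div_lt_iff_lt_mul hG).mp (Nat.lt_succ_self _)
  have h3 : μ * N ≤ G * H := Nat.div_mul_le_self _ _
  have h4 : G * H < (μ + 1) * N := (Nat.div_lt_iff_lt_mul hN).mp (Nat.lt_succ_self _)
  have h5 : Q * H ≤ q * μ := Nat.div_mul_le_self _ _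
  have h6 : q * μ < (Q + 1) * H := (Nat.div_lt_iff_lt_mul hH).mp (Nat.lt_succ_self _)
  have hXN2 : X < N ^ 2 := by
    have := Nat.mul_lt_mul'' hA hB
    simpa [pow_two] using this
  have hqH : q < H := by
    have : q * G < G * H := lt_of_le_of_lt h1 (lt_of_lt_of_le hXN2 hcond)
    nlinarith
  have hμH : μ < H := by
    have : μ * N < N * H := lt_of_le_of_lt h3 (by nlinarith)
    nlinarith
  have goal1 : Q * N ≤ X := by
    have : Q * N * H ≤ X * H := by nlinarith
    exact Nat.le_of_mul_le_mul_right this hH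
  have goal3 : X < (Q + 3) * N := by
    have : X * H < (Q + 3) * N * H := by nlinarith
    exact Nat.lt_of_mul_lt_mul_right this
  have hE : (Q + 3) * N = Q * N + 3 * N := by ring
  refine ⟨goal1, ?_, by omega⟩
  have hsum : X - Q * N + Q * N = X := Nat.sub_add_cancel goal1
  show (X - Q * N) % N = X % N
  conv_rhs => rw [← hsum]
  simp [Nat.add_mul_mod_self_right]
end

section
/- Let N, G, H be positive natural numbers with 2·G < N and 2·N² ≤ G·H, and let X be a natural number with X < N². Set μ = ⌊G·H / N⌋ and Q̂ = ⌊(⌊X/G⌋ · μ) / H⌋. Then ⌊X/N⌋ ≤ Q̂ + 1, i.e. the quotient estimate is at most 1 away from the actual quotient ⌊X/N⌋. -/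
/-- If `2*G < N`, `2*N^2 ≤ G*H` and `X < N^2`, then the Barrett quotient
estimate `Q̂ = ((X / G) * (G * H / N)) / H` is at most 1 below the true
quotient `X / N`. All divisions are natural-number (floor) divisions. -/
theorem barrett_estimate_within_one
    (N G H X : ℕ) (hN : 0 < N) (hG : 0 < G) (hH : 0 < H)
    (hGN : 2 * G < N) (hcond : 2 * N ^ 2 ≤ G * H) (hX : X < N ^ 2) :
    X / N ≤ (X / G * (G * H / N)) / H + 1 := by
  set q1 := X / G with hq1
  set μ := G * H / N with hμ
  set Q := X / N with hQ
  rcases Nat.lt_or_ge Q 1 with h | h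
  · have h0 : Q = 0 := Nat.lt_one_iff.mp h
    rw [h0]; exact Nat.zero_le _
  -- reduce to (Q - 1) * H ≤ q1 * μ
  have key : (Q - 1) * H ≤ q1 * μ := by
    have hxq : X < (q1 + 1) * G :=
      (Nat.div_lt_iff_lt_mul hG).mp (Nat.lt_succ_self q1)
    have hμN : G * H < (μ + 1) * N :=
      (Nat.div_lt_iff_lt_mul hN).mp (Nat.lt_succ_self μ)
    have hQN : Q * N ≤ X := Nat.div_mul_le_self X N
    have hGX : G ≤ X := by
      by_contra hc
      push_neg at hc
      have : X / N = 0 := Nat.div_eq_of_lt (by omega)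
      omega
    -- cast to integers
    have h1 : (X : ℤ) + 1 ≤ (q1 : ℤ) * G + G := by
      have : (X : ℤ) < ((q1 : ℤ) + 1) * G := by exact_mod_cast hxq
      linarith [this]
    have h2 : (G : ℤ) * H + 1 ≤ (N : ℤ) * μ + N := by
      have : (G : ℤ) * H < ((μ : ℤ) + 1) * N := by exact_mod_cast hμN
      linarith [this]
    have h3 : (Q : ℤ) * N ≤ X := by exact_mod_cast hQN
    have h4 : (X : ℤ) + 1 ≤ (N : ℤ) ^ 2 := by exact_mod_cast hX
    have h5 : 2 * (G : ℤ) + 1 ≤ N := by exact_mod_cast hGN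
    have h6 : 2 * (N : ℤ) ^ 2 ≤ G * H := by exact_mod_cast hcond
    have h7 : (G : ℤ) ≤ X := by exact_mod_cast hGX
    have h8 : (1 : ℤ) ≤ Q := by exact_mod_cast h
    have hHp : (0 : ℤ) < H := by exact_mod_cast hH
    have hGp : (0 : ℤ) < G := by exact_mod_cast hG
    have hNp : (0 : ℤ) < N := by exact_mod_cast hN
    -- step 1: G*N*(q1*μ) ≥ (X+1-G)*(G*H+1-N)
    have sA : (0:ℤ) ≤ (X : ℤ) + 1 - G := by linarith
    have sB : (0:ℤ) ≤ (G : ℤ) * H + 1 - N := by nlinarith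
    have step1 : ((X : ℤ) + 1 - G) * ((G : ℤ) * H + 1 - N) ≤ ((q1:ℤ) * G) * ((N:ℤ) * μ) := by
      apply mul_le_mul (by linarith) (by linarith) sB
      positivity
    -- step 2: (Q-1)*H*(G*N) ≤ (X+1-G)*(G*H+1-N)
    have step2 : ((Q:ℤ) - 1) * H * (G * N) ≤ ((X : ℤ) + 1 - G) * ((G : ℤ) * H + 1 - N) := by
      have hx1 : (Q:ℤ) * N * (H * G) ≤ (X:ℤ) * (H * G) :=
        mul_le_mul_of_nonneg_right h3 (by positivity)
      nlinarith [mul_nonneg (by linarith : (0:ℤ) ≤ (G:ℤ) * H - 2 * N ^ 2)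
                    (by linarith : (0:ℤ) ≤ (N:ℤ) - G),
                 mul_nonneg (by linarith : (0:ℤ) ≤ 2 * ((N:ℤ) - G) - N - 1)
                    (by positivity : (0:ℤ) ≤ (N:ℤ) ^ 2),
                 mul_le_mul_of_nonneg_right h4 hNp.le,
                 mul_pos hNp hNp, mul_pos hGp hNp]
    have goalZ : ((Q : ℤ) - 1) * H ≤ (q1 : ℤ) * μ := by
      have := step2.trans step1
      have hGN' : (0:ℤ) < (G:ℤ) * N := mul_pos hGp hNp
      have : ((Q : ℤ) - 1) * H * (G * N) ≤ ((q1:ℤ) * μ) * (G * N) := by linarith [this]; 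
      exact le_of_mul_le_mul_right this hGN'
    have hc : ((Q : ℤ) - 1) * H = ((Q - 1 : ℕ) : ℤ) * H := by
      push_cast [Nat.cast_sub h]
      ring
    rw [hc] at goalZ
    exact_mod_cast goalZ
  have : Q - 1 ≤ q1 * μ / H := (Nat.le_div_iff_mul_le hH).mpr key
  omega
end

section
/- (Case 3) Let N, G, H be positive natural numbers with 2·G < N and 2·N² ≤ G·H, and let A, B be natural numbers with A < N and B < N. Set X = A·B, μ = ⌊G·H / N⌋, Q̂ = ⌊(⌊X/G⌋ · μ) / H⌋, and C = X − Q̂·N. Then Q̂·N ≤ X, C ≡ A·B (mod N), and 0 ≤ C < 2·N. -/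
private lemma barrett_aux (a : ℕ) {b : ℕ} (hb : 0 < b) : a < (a / b + 1) * b := by
  have h := Nat.div_add_mod a b
  have h2 := Nat.mod_lt a hb
  nlinarith [h, h2]

/-- Barrett modular multiplication (Case 3): with `2*G < N`, `2*N^2 ≤ G*H`,
inputs `A, B < N`, the value `C = A*B - Q̂*N` satisfies `Q̂*N ≤ A*B`,
`C ≡ A*B (mod N)`, and `C < 2*N`. -/
theorem barrett_mod_mul_case3
    (N G H A B : ℕ) (hN : 0 < N) (hG : 0 < G) (hH : 0 < H)
    (hGN : 2 * G < N) (hcond : 2 * N ^ 2 ≤ G * H)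
    (hA : A < N) (hB : B < N) :
    (((A * B) / G * (G * H / N)) / H) * N ≤ A * B ∧
      (A * B - (((A * B) / G * (G * H / N)) / H) * N) ≡ A * B [MOD N] ∧
      A * B - (((A * B) / G * (G * H / N)) / H) * N < 2 * N := by
  set X := A * B with hX
  set q := X / G with hq
  set μ := G * H / N with hμ
  set Q := (q * μ) / H with hQ
  -- basic div facts
  have h1' : q * G ≤ X := Nat.div_mul_le_self X G
  have h1 : X < (q + 1) * G := hq ▸ barrett_aux X hG
  have h2' : μ * N ≤ G * H := Nat.div_mul_le_self (G * H) N
  have h2 : G * H < (μ + 1) * N := hμ ▸ barrett_aux (G * H) hN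
  have h3' : Q * H ≤ q * μ := Nat.div_mul_le_self (q * μ) H
  have h3 : q * μ < (Q + 1) * H := hQ ▸ barrett_aux (q * μ) hH
  -- first claim: Q * N ≤ X
  have hQN : Q * N ≤ X := by
    have key : Q * N * (G * H) ≤ X * (G * H) := by
      calc Q * N * (G * H) = (Q * H) * (G * N) := by ring
        _ ≤ (q * μ) * (G * N) := Nat.mul_le_mul_right _ h3'
        _ = (q * G) * (μ * N) := by ring
        _ ≤ X * (G * H) := Nat.mul_le_mul h1' h2'
    exact Nat.le_of_mul_le_mul_right key (Nat.mul_pos hG hH)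
  have hXN : X < N ^ 2 := by
    have := Nat.mul_lt_mul'' hA hB
    simpa [hX, pow_two] using this
  -- third claim: X < Q * N + 2 * N, via integers
  have hlt : X < Q * N + 2 * N := by
    zify at *
    nlinarith [mul_le_mul_of_nonneg_right h3'
        (by positivity : (0:ℤ) ≤ G * N),
      mul_le_mul (by linarith : (X:ℤ) - G + 1 ≤ q * G)
        (by linarith : (G:ℤ) * H - N + 1 ≤ μ * N)
        (by nlinarith : (0:ℤ) ≤ (G:ℤ) * H - N + 1)
        (by positivity : (0:ℤ) ≤ (q:ℤ) * G),
      mul_lt_mul_of_pos_right h3 (by positivity : (0:ℤ) < G * N),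
      mul_le_mul_of_nonneg_right hcond (by positivity : (0:ℤ) ≤ (N:ℤ)),
      mul_le_mul_of_nonneg_right (by linarith : 2 * (G:ℤ) + 1 ≤ N)
        (by positivity : (0:ℤ) ≤ (G:ℤ) * H),
      mul_le_mul_of_nonneg_right (by linarith : (X:ℤ) + 1 ≤ N^2)
        (by positivity : (0:ℤ) ≤ (N:ℤ))]
  refine ⟨hQN, ?_, by omega⟩
  have : N ∣ X - (X - Q * N) := by
    have : X - (X - Q * N) = Q * N := by omega
    rw [this]; exact Dvd.intro_left Q rfl
  exact (Nat.modEq_iff_dvd' (by omega)).mpr this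
end

section
/- (Case 2: stable range for iterated use) Let N, G, H be positive natural numbers with G < N and 9·N² ≤ G·H, and let A, B be natural numbers with A < 3·N and B < 3·N. Set X = A·B, μ = ⌊G·H / N⌋, Q̂ = ⌊(⌊X/G⌋ · μ) / H⌋, and C = X − Q̂·N. Then Q̂·N ≤ X, C ≡ A·B (mod N), and 0 ≤ C < 3·N; i.e. the inputs and output of the Barrett modular multiplication occupy the same range [0, 3·N). -/
/-- Barrett modular multiplication (Case 2, stable range): with `G < N`,
`9*N^2 ≤ G*H`, inputs `A, B < 3*N`, the value `C = A*B - Q̂*N` satisfies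
`Q̂*N ≤ A*B`, `C ≡ A*B (mod N)`, and `C < 3*N`. -/
theorem barrett_mod_mul_case2
    (N G H A B : ℕ) (hN : 0 < N) (hG : 0 < G) (hH : 0 < H)
    (hGN : G < N) (hcond : 9 * N ^ 2 ≤ G * H)
    (hA : A < 3 * N) (hB : B < 3 * N) :
    (((A * B) / G * (G * H / N)) / H) * N ≤ A * B ∧
      (A * B - (((A * B) / G * (G * H / N)) / H) * N) ≡ A * B [MOD N] ∧
      A * B - (((A * B) / G * (G * H / N)) / H) * N < 3 * N := by
  set X := A * B with hX
  set μ := G * H / N with hμ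
  set q1 := X / G with hq1
  set q2 := q1 * μ / H with hq2
  have e1 : G * q1 + X % G = X := Nat.div_add_mod X G
  have r1 : X % G < G := Nat.mod_lt _ hG
  have e2 : N * μ + (G * H) % N = G * H := Nat.div_add_mod (G * H) N
  have r2 : (G * H) % N < N := Nat.mod_lt _ hN
  have e3 : H * q2 + (q1 * μ) % H = q1 * μ := Nat.div_add_mod (q1 * μ) H
  have r3 : (q1 * μ) % H < H := Nat.mod_lt _ hH
  have hXle : X ≤ (3 * N - 1) * (3 * N - 1) := by
    apply Nat.mul_le_mul <;> omega
  have hXlt : X < 9 * N ^ 2 := by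
    have : (3 * N - 1) * (3 * N - 1) < 9 * N ^ 2 := by
      have h1 : 1 ≤ 3 * N := by omega
      nlinarith [Nat.sub_add_cancel h1]
    omega
  have hq1G : q1 * G ≤ X := Nat.div_mul_le_self X G
  have hq1H : q1 < H := by
    have : q1 * G < G * H := by omega
    have := Nat.lt_of_mul_lt_mul_right (a := q1) (b := G) (c := H)
    nlinarith
  have ha : q2 * H ≤ q1 * μ := by rw [mul_comm]; omega
  have hb : μ * N ≤ G * H := by rw [mul_comm]; omega
  -- Part 1
  have h1 : q2 * N ≤ X := by
    have key : q2 * N * (G * H) ≤ X * (G * H) := by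
      calc q2 * N * (G * H) = (q2 * H) * (N * G) := by ring
        _ ≤ (q1 * μ) * (N * G) := Nat.mul_le_mul_right _ ha
        _ = (μ * N) * (q1 * G) := by ring
        _ ≤ (G * H) * (q1 * G) := Nat.mul_le_mul_right _ hb
        _ = (q1 * G) * (G * H) := by ring
        _ ≤ X * (G * H) := Nat.mul_le_mul_right _ hq1G
    exact Nat.le_of_mul_le_mul_right key (Nat.mul_pos hG hH)
  refine ⟨h1, ?_, ?_⟩
  · have hd : N ∣ X - (X - q2 * N) := by
      have h : X - (X - q2 * N) = q2 * N := by omega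
      rw [h]; exact Dvd.intro_left q2 rfl
    exact (Nat.modEq_iff_dvd' (Nat.sub_le _ _)).mpr hd
  · -- Part 3 : X - q2*N < 3*N
    have m2 : G * H * q1 = N * μ * q1 + (G * H % N) * q1 := by
      calc G * H * q1 = (N * μ + G * H % N) * q1 := by rw [e2]
        _ = N * μ * q1 + (G * H % N) * q1 := by ring
    have m3 : q1 * μ * N = H * q2 * N + (q1 * μ % H) * N := by
      calc q1 * μ * N = (H * q2 + q1 * μ % H) * N := by rw [e3]
        _ = H * q2 * N + (q1 * μ % H) * N := by ring
    have E : X * H = H * q2 * N + (q1 * μ % H) * N + (G * H % N) * q1 + (X % G) * H := by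
      calc X * H = (G * q1 + X % G) * H := by rw [e1]
        _ = G * H * q1 + (X % G) * H := by ring
        _ = N * μ * q1 + (G * H % N) * q1 + (X % G) * H := by rw [m2]
        _ = q1 * μ * N + (G * H % N) * q1 + (X % G) * H := by ring
        _ = H * q2 * N + (q1 * μ % H) * N + (G * H % N) * q1 + (X % G) * H := by
            rw [m3]
    have hb1 : (X % G) * H + H ≤ N * H := by
      have h := Nat.mul_le_mul_right H (show X % G + 1 ≤ N by omega)
      calc (X % G) * H + H = (X % G + 1) * H := by ring
        _ ≤ N * H := h
    have hb2 : (G * H % N) * q1 < N * H := by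
      have h := Nat.mul_le_mul (show G * H % N + 1 ≤ N by omega)
        (show q1 + 1 ≤ H by omega)
      have hexp : (G * H % N + 1) * (q1 + 1)
          = (G * H % N) * q1 + (G * H % N) + q1 + 1 := by ring
      linarith
    have hb3 : (q1 * μ % H) * N + N ≤ N * H := by
      have h := Nat.mul_le_mul (show (N:ℕ) ≤ N from le_refl N)
        (show q1 * μ % H + 1 ≤ H by omega)
      calc (q1 * μ % H) * N + N = N * (q1 * μ % H + 1) := by ring
        _ ≤ N * H := h
    have key : X * H < (q2 * N + 3 * N) * H := by
      have expand : (q2 * N + 3 * N) * H = H * q2 * N + 3 * (N * H) := by ring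
      rw [expand, E]
      linarith
    have := Nat.lt_of_mul_lt_mul_right key
    omega
end

section
/- (Case 4: stable range for iterated use) Let N, G, H be positive natural numbers with 2·G < N and 8·N² ≤ G·H, and let A, B be natural numbers with A < 2·N and B < 2·N. Set X = A·B, μ = ⌊G·H / N⌋, Q̂ = ⌊(⌊X/G⌋ · μ) / H⌋, and C = X − Q̂·N. Then Q̂·N ≤ X, C ≡ A·B (mod N), and 0 ≤ C < 2·N; i.e. the inputs and output of the Barrett modular multiplication occupy the same range [0, 2·N). -/
private lemma lt_div_add_one_mul (a b : ℕ) (hb : 0 < b) : a < (a / b + 1) * b := by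
  have hdm := Nat.div_add_mod a b
  have hm := Nat.mod_lt a hb
  nlinarith [hdm, hm]

/-- Barrett modular multiplication (Case 4, stable range): with `2*G < N`,
`8*N^2 ≤ G*H`, inputs `A, B < 2*N`, the value `C = A*B - Q̂*N` satisfies
`Q̂*N ≤ A*B`, `C ≡ A*B (mod N)`, and `C < 2*N`. -/
theorem barrett_mod_mul_case4
    (N G H A B : ℕ) (hN : 0 < N) (hG : 0 < G) (hH : 0 < H)
    (hGN : 2 * G < N) (hcond : 8 * N ^ 2 ≤ G * H)
    (hA : A < 2 * N) (hB : B < 2 * N) :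
    (((A * B) / G * (G * H / N)) / H) * N ≤ A * B ∧
      (A * B - (((A * B) / G * (G * H / N)) / H) * N) ≡ A * B [MOD N] ∧
      A * B - (((A * B) / G * (G * H / N)) / H) * N < 2 * N := by
  set X := A * B with hXdef
  set q1 := X / G with hq1def
  set μ := G * H / N with hμdef
  set Q := q1 * μ / H with hQdef
  have h1 : q1 * G ≤ X := Nat.div_mul_le_self _ _
  have h2 : X < (q1 + 1) * G := lt_div_add_one_mul _ _ hG
  have h3 : μ * N ≤ G * H := Nat.div_mul_le_self _ _
  have h4 : G * H < (μ + 1) * N := lt_div_add_one_mul _ _ hN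
  have h5 : Q * H ≤ q1 * μ := Nat.div_mul_le_self _ _
  have h6 : q1 * μ < (Q + 1) * H := lt_div_add_one_mul _ _ hH
  have hXlt : X < 4 * N ^ 2 := by
    calc X < 2 * N * (2 * N) := Nat.mul_lt_mul'' hA hB
      _ = 4 * N ^ 2 := by ring
  -- Part 1: Q * N ≤ X
  have key1 : Q * N * H ≤ X * H := by
    calc Q * N * H = Q * H * N := by ring
      _ ≤ q1 * μ * N := Nat.mul_le_mul_right _ h5
      _ = q1 * (μ * N) := by ring
      _ ≤ q1 * (G * H) := Nat.mul_le_mul_left _ h3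
      _ = q1 * G * H := by ring
      _ ≤ X * H := Nat.mul_le_mul_right _ h1
  have part1 : Q * N ≤ X := Nat.le_of_mul_le_mul_right key1 hH
  -- auxiliary bounds
  have hq1H : 2 * q1 < H := by
    have hq : 2 * q1 * G < H * G := by
      calc 2 * q1 * G = 2 * (q1 * G) := by ring
        _ ≤ 2 * X := Nat.mul_le_mul_left _ h1
        _ < 8 * N ^ 2 := by omega
        _ ≤ G * H := hcond
        _ = H * G := by ring
    exact Nat.lt_of_mul_lt_mul_right hq
  -- Part 3: X < Q * N + 2 * N
  have e1 : X * H < (q1 + 1) * G * H := (Nat.mul_lt_mul_right hH).mpr h2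
  have e2 : (q1 + 1) * (G * H) < (q1 + 1) * ((μ + 1) * N) :=
    (Nat.mul_lt_mul_left (Nat.succ_pos _)).mpr h4
  have e3 : q1 * μ * N < (Q + 1) * H * N := (Nat.mul_lt_mul_right hN).mpr h6
  have e4 : 2 * q1 * N ≤ H * N := Nat.mul_le_mul_right _ (le_of_lt hq1H)
  have e5 : 2 * G * H ≤ N * H := Nat.mul_le_mul_right _ (le_of_lt hGN)
  have e6 : 2 * N ≤ H := by
    -- 16 * N^2 ≤ 2 * G * H ≤ N * H, so 16 * N ≤ H
    have h16 : 16 * N * N ≤ N * H := by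
      calc 16 * N * N = 2 * (8 * N ^ 2) := by ring
        _ ≤ 2 * (G * H) := Nat.mul_le_mul_left _ hcond
        _ = 2 * G * H := by ring
        _ ≤ N * H := e5
    have : N * (16 * N) ≤ N * H := by
      calc N * (16 * N) = 16 * N * N := by ring
        _ ≤ N * H := h16
    have := Nat.le_of_mul_le_mul_left this hN
    omega
  have main : X * H < (Q * N + 2 * N) * H := by nlinarith [e1, e2, e3, e4, e5, e6]
  have part3 : X < Q * N + 2 * N := Nat.lt_of_mul_lt_mul_right main
  refine ⟨part1, ?_, by omega⟩
  have : N ∣ X - (X - Q * N) := by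
    rw [Nat.sub_sub_self part1]
    exact dvd_mul_left N Q
  exact (Nat.modEq_iff_dvd' (Nat.sub_le _ _)).mpr this
end

section
/- Let N, G, H be positive natural numbers and X a natural number. Then the intermediate Barrett product E = ⌊X/G⌋ · ⌊G·H/N⌋ satisfies E ≤ ⌊X·H/N⌋; consequently, for any natural number M, if X·H < N·M then E < M. -/
/-- Bound on the intermediate Barrett product: `E = (X/G) * (G*H/N)` satisfies
`E ≤ X*H/N`; consequently for any `M`, if `X*H < N*M` then `E < M`.
All divisions are natural-number (floor) divisions. -/
theorem barrett_intermediate_bound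
    (N G H X : ℕ) (hN : 0 < N) (hG : 0 < G) (hH : 0 < H) :
    X / G * (G * H / N) ≤ X * H / N ∧
      ∀ M : ℕ, X * H < N * M → X / G * (G * H / N) < M := by
  have h1 : X / G * (G * H / N) ≤ X * H / N := by
    calc X / G * (G * H / N) ≤ X / G * (G * H) / N := Nat.mul_div_le_mul_div_assoc _ _ _
    _ ≤ X * H / N := by
        apply Nat.div_le_div_right
        rw [← mul_assoc]
        exact Nat.mul_le_mul_right H (Nat.div_mul_le_self X G)
  refine ⟨h1, fun M hM => lt_of_le_of_lt h1 ?_⟩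
  rw [Nat.div_lt_iff_lt_mul hN]
  rwa [Nat.mul_comm N M] at hM
end

section
/- Let N, G, H be positive natural numbers and let X be a natural number with X < N². Set μ = ⌊G·H / N⌋ and Q̂ = ⌊(⌊X/G⌋ · μ) / H⌋. Then Q̂ ≤ N − 1. -/
/-- If `X < N^2`, the Barrett quotient estimate
`Q̂ = ((X / G) * (G * H / N)) / H` satisfies `Q̂ ≤ N - 1`. -/
theorem barrett_estimate_le_N_sub_one
    (N G H X : ℕ) (hN : 0 < N) (hG : 0 < G) (hH : 0 < H)
    (hX : X < N ^ 2) :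
    (X / G * (G * H / N)) / H ≤ N - 1 := by
  have h1 : N * (X / G * (G * H / N)) < N * (N * H) := by
    calc N * (X / G * (G * H / N)) = X / G * (N * (G * H / N)) := by ring
    _ ≤ X / G * (G * H) := Nat.mul_le_mul_left _ (Nat.mul_div_le _ _)
    _ = (X / G * G) * H := by ring
    _ ≤ X * H := Nat.mul_le_mul_right _ (Nat.div_mul_le_self _ _)
    _ < N ^ 2 * H := by exact (Nat.mul_lt_mul_right hH).mpr hX
    _ = N * (N * H) := by ring
  have h2 : X / G * (G * H / N) < N * H := lt_of_mul_lt_mul_left h1 (Nat.zero_le N)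
  have h3 : (X / G * (G * H / N)) / H < N := by
    rw [Nat.div_lt_iff_lt_mul hH]; omega
  omega
end

section
/- (Correctness of the RNS quotient recursion, Appendix A) Let M₁, …, Mₙ be pairwise coprime positive natural numbers, let a < n, and let X be a natural number. For 1 ≤ k ≤ a and k < i ≤ n, let u_{k,i} be a natural number with M_k·u_{k,i} ≡ 1 (mod M_i) (such inverses exist by pairwise coprimality). Define natural numbers q_{k,i} for 0 ≤ k ≤ a and k < i ≤ n recursively by q_{0,i} = X mod M_i and, for k ≥ 1, q_{k,i} = ((q_{k−1,i} + M_i·M_k − q_{k−1,k})·u_{k,i}) mod M_i. Then for every 0 ≤ k ≤ a and every i with k < i ≤ n, q_{k,i} ≡ ⌊X/(M₁·M₂⋯M_k)⌋ (mod M_i). In particular q_{a,i} ≡ ⌊X/(M₁⋯M_a)⌋ (mod M_i) for all i > a: the residues of the quotient of X by M₁⋯M_a are computed purely from the residues of X, using only modular arithmetic. -/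
/-- Correctness of the RNS quotient recursion (Appendix A).
Moduli `M 1, …, M n` are pairwise coprime and positive, `a < n`.
`u k i` is an inverse of `M k` modulo `M i`, and `q k i` follows the
recursion `q 0 i = X % M i`,
`q k i = ((q (k-1) i + M i * M k - q (k-1) k) * u k i) % M i`.
Then `q k i ≡ X / (M 1 * ⋯ * M k) (mod M i)` for all `k ≤ a < i ≤ n`
(more precisely, for all `k ≤ a` and `k < i ≤ n`). -/
theorem rns_quotient_recursion_correct
    (n a : ℕ) (ha : a < n) (M : ℕ → ℕ) (X : ℕ)
    (hMpos : ∀ i, 1 ≤ i → i ≤ n → 0 < M i)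
    (hcop : ∀ i j, 1 ≤ i → i < j → j ≤ n → Nat.Coprime (M i) (M j))
    (u : ℕ → ℕ → ℕ)
    (hu : ∀ k i, 1 ≤ k → k ≤ a → k < i → i ≤ n → M k * u k i ≡ 1 [MOD M i])
    (q : ℕ → ℕ → ℕ)
    (hq0 : ∀ i, 1 ≤ i → i ≤ n → q 0 i = X % M i)
    (hqrec : ∀ k i, 1 ≤ k → k ≤ a → k < i → i ≤ n →
      q k i = ((q (k - 1) i + M i * M k - q (k - 1) k) * u k i) % M i) :
    ∀ k i, k ≤ a → k < i → i ≤ n →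
      q k i ≡ X / (∏ j ∈ Finset.Icc 1 k, M j) [MOD M i] := by
  intro k
  induction k with
  | zero =>
    intro i _ hi hin
    rw [hq0 i hi hin]
    simp only [Finset.Icc_self, Finset.Icc_eq_empty_of_lt (by norm_num : (1:ℕ) > 0)]
    simp [Nat.div_one]
    exact Nat.mod_modEq X (M i)
  | succ k ih =>
    intro i hka hki hin
    have hk1n : k + 1 ≤ n := le_trans hki.le hin
    have hMk1 : 0 < M (k + 1) := hMpos _ (Nat.le_add_left 1 k) hk1n
    have hMi : 0 < M i := hMpos i (by omega) hin
    set P := ∏ j ∈ Finset.Icc 1 k, M j with hP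
    set Q := X / P with hQdef
    have ihi : q k i ≡ Q [MOD M i] := ih i (by omega) (by omega) hin
    have ihk : q k (k + 1) ≡ Q [MOD M (k + 1)] := ih (k + 1) (by omega) (by omega) hk1n
    -- q k (k+1) is reduced mod M (k+1)
    have hlt : q k (k + 1) < M (k + 1) := by
      rcases Nat.eq_zero_or_pos k with hk0 | hkpos
      · subst hk0
        rw [hq0 (0 + 1) (by omega) hk1n]
        exact Nat.mod_lt _ hMk1
      · rw [hqrec k (k + 1) hkpos (by omega) (by omega) hk1n]
        exact Nat.mod_lt _ hMk1
    have hB : q k (k + 1) = Q % M (k + 1) := by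
      have := ihk.symm
      unfold Nat.ModEq at this
      rw [Nat.mod_eq_of_lt hlt] at this
      exact this.symm
    set B := q k (k + 1) with hBdef
    set Q' := Q / M (k + 1) with hQ'def
    have hprod : (∏ j ∈ Finset.Icc 1 (k + 1), M j) = P * M (k + 1) := by
      rw [hP, Finset.prod_Icc_succ_top (by omega)]
    have hgoalQ' : X / (∏ j ∈ Finset.Icc 1 (k + 1), M j) = Q' := by
      rw [hprod, hQ'def, hQdef, Nat.div_div_eq_div_mul]
    rw [hgoalQ', hqrec (k + 1) i (by omega) hka hki hin]
    simp only [Nat.add_sub_cancel]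
    have hBle : B ≤ M i * M (k + 1) := le_trans hlt.le (Nat.le_mul_of_pos_left _ hMi)
    have hdm : M (k + 1) * Q' + B = Q := by
      rw [hB, hQ'def]; exact Nat.div_add_mod Q (M (k + 1))
    have h1 : q k i + M i * M (k + 1) - B = q k i + (M i * M (k + 1) - B) := by omega
    have h2 : q k i + (M i * M (k + 1) - B) ≡ Q + (M i * M (k + 1) - B) [MOD M i] :=
      ihi.add_right _
    have h3 : Q + (M i * M (k + 1) - B) = M (k + 1) * Q' + M i * M (k + 1) := by omega
    have h4 : M (k + 1) * Q' + M i * M (k + 1) ≡ M (k + 1) * Q' [MOD M i] := by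
      show _ % _ = _ % _
      exact Nat.add_mul_mod_self_left _ _ _
    have h5 : (q k i + M i * M (k + 1) - B) * u (k + 1) i
        ≡ (M (k + 1) * Q') * u (k + 1) i [MOD M i] := by
      refine Nat.ModEq.mul_right _ ?_
      rw [h1]
      exact (h2.trans (h3 ▸ h4))
    have h6 : (M (k + 1) * Q') * u (k + 1) i ≡ Q' [MOD M i] := by
      have := (hu (k + 1) i (by omega) hka hki hin).mul_right Q'
      calc (M (k + 1) * Q') * u (k + 1) i
          = M (k + 1) * u (k + 1) i * Q' := by ring
        _ ≡ 1 * Q' [MOD M i] := this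
        _ = Q' := one_mul Q'
    exact (Nat.mod_modEq _ _).trans (h5.trans h6)
end
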